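/- Let μ, r ∈ ℝ, σ > 0, T > 0, δ, ε ∈ (0,1), ξ ~ N(0,1), and I_T = e^{(μ−σ²/2)T + σ√T ξ}. If |r + σ² − μ| ≥ (z_{δ/2} + z_ε)σ/√T, then P( I_T/e^{rT} ∈ ( e^{σ²T/2 − z_{δ/2}σ√T}, e^{σ²T/2 + z_{δ/2}σ√T} ) ) ≤ ε. -/

import Mathlib

/-!
Taking logarithms, the event says that `ξ` lies in the interval of radius `z` around
`d = (r + σ² - μ)√T / σ`. The hypothesis gives `|d| ≥ z + w`, so this interval lies inside one of
the tails `{ξ ≥ w}`, `{ξ ≤ -w}`, and both have probability `ε` by the symmetry of `N(0,1)`.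
-/

open MeasureTheory ProbabilityTheory Real Set

instance isNegInvariant_gaussianReal_zero (v : NNReal) : (gaussianReal 0 v).IsNegInvariant :=
  ⟨by rw [Measure.neg_def]; simpa using gaussianReal_map_neg (μ := 0) (v := v)⟩

lemma measure_Ioo_le_measure_Ici_of_add_le_abs (ν : Measure ℝ) [ν.IsNegInvariant]
    {a z w : ℝ} (h : z + w ≤ |a|) : ν (Ioo (a - z) (a + z)) ≤ ν (Ici w) := by
  rcases le_abs.mp h with ha | ha
  · exact measure_mono fun x hx => by simp only [mem_Ici]; linarith [hx.1]
  · calc ν (Ioo (a - z) (a + z)) ≤ ν (-Ici w) := measure_mono fun x hx => by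
          simp only [neg_Ici, mem_Iic]; linarith [hx.2]
      _ = ν (Ici w) := Measure.measure_neg ν _

lemma exp_div_exp_mem_Ioo_iff {μ r σ T z : ℝ} (hσ : 0 < σ) (hT : 0 < T) (x : ℝ) :
    exp ((μ - σ ^ 2 / 2) * T + σ * √T * x) / exp (r * T) ∈
        Ioo (exp (σ ^ 2 * T / 2 - z * σ * √T)) (exp (σ ^ 2 * T / 2 + z * σ * √T)) ↔
      x ∈ Ioo ((r + σ ^ 2 - μ) * √T / σ - z) ((r + σ ^ 2 - μ) * √T / σ + z) := by
  have hs : 0 < σ * √T := mul_pos hσ (sqrt_pos.mpr hT)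
  have hd : (r + σ ^ 2 - μ) * √T / σ * (σ * √T) = (r + σ ^ 2 - μ) * T := by
    field_simp; rw [sq_sqrt hT.le]
  rw [← exp_sub, mem_Ioo, mem_Ioo, exp_lt_exp, exp_lt_exp,
    ← mul_lt_mul_iff_of_pos_right hs (c := x), ← mul_lt_mul_iff_of_pos_right hs (b := x)]
  constructor <;> rintro ⟨h1, h2⟩ <;> constructor <;> linarith

lemma add_le_abs_mul_sqrt_div {k σ T z w : ℝ} (hσ : 0 < σ) (hT : 0 < T)
    (h : (z + w) * σ / √T ≤ |k|) : z + w ≤ |k * √T / σ| := by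
  rw [abs_div, abs_mul, abs_of_pos hσ, abs_of_pos (sqrt_pos.mpr hT), le_div_iff₀ hσ]
  rwa [div_le_iff₀ (sqrt_pos.mpr hT)] at h

theorem stmt7_general {Ω : Type*} [MeasurableSpace Ω] (P : Measure Ω)
    (ξ : Ω → ℝ) (hξm : Measurable ξ) (hξ : P.map ξ = gaussianReal 0 1)
    (μ r σ T ε z w : ℝ) (hσ : 0 < σ) (hT : 0 < T)
    (hw : gaussianReal 0 1 (Set.Ici w) = ENNReal.ofReal ε)
    (hc : (z + w) * σ / Real.sqrt T ≤ |r + σ ^ 2 - μ|) :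
    P {ω | Real.exp ((μ - σ ^ 2 / 2) * T + σ * Real.sqrt T * ξ ω) / Real.exp (r * T) ∈
        Set.Ioo (Real.exp (σ ^ 2 * T / 2 - z * σ * Real.sqrt T))
          (Real.exp (σ ^ 2 * T / 2 + z * σ * Real.sqrt T))}
      ≤ ENNReal.ofReal ε := by
  set d := (r + σ ^ 2 - μ) * √T / σ
  have hevent : {ω | exp ((μ - σ ^ 2 / 2) * T + σ * √T * ξ ω) / exp (r * T) ∈
      Ioo (exp (σ ^ 2 * T / 2 - z * σ * √T)) (exp (σ ^ 2 * T / 2 + z * σ * √T))} =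
      ξ ⁻¹' Ioo (d - z) (d + z) := by
    ext ω
    exact exp_div_exp_mem_Ioo_iff hσ hT (ξ ω)
  rw [hevent, ← Measure.map_apply hξm measurableSet_Ioo, hξ, ← hw]
  exact measure_Ioo_le_measure_Ici_of_add_le_abs _ (add_le_abs_mul_sqrt_div hσ hT hc)

/-- if `|r + σ² − μ| ≥ (z_{δ/2} + z_ε)σ/√T` then the probability that
`I_T/e^{rT}` lies in `(e^{σ²T/2 − z_{δ/2}σ√T}, e^{σ²T/2 + z_{δ/2}σ√T})` is at most `ε`. -/
theorem stmt7 {Ω : Type*} [MeasurableSpace Ω] (P : Measure Ω) [IsProbabilityMeasure P]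
    (ξ : Ω → ℝ) (hξm : Measurable ξ) (hξ : P.map ξ = gaussianReal 0 1)
    (μ r σ T δ ε z w : ℝ) (hσ : 0 < σ) (hT : 0 < T)
    (hδ : 0 < δ ∧ δ < 1) (hε : 0 < ε ∧ ε < 1)
    (hz : gaussianReal 0 1 (Set.Ici z) = ENNReal.ofReal (δ / 2))
    (hw : gaussianReal 0 1 (Set.Ici w) = ENNReal.ofReal ε)
    (hc : (z + w) * σ / Real.sqrt T ≤ |r + σ ^ 2 - μ|) :
    P {ω | Real.exp ((μ - σ ^ 2 / 2) * T + σ * Real.sqrt T * ξ ω) / Real.exp (r * T) ∈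
        Set.Ioo (Real.exp (σ ^ 2 * T / 2 - z * σ * Real.sqrt T))
          (Real.exp (σ ^ 2 * T / 2 + z * σ * Real.sqrt T))}
      ≤ ENNReal.ofReal ε :=
  stmt7_general P ξ hξm hξ μ r σ T ε z w hσ hT hw hc
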